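/- arXiv:1907.09749 — 4 statements merged into one kernel-verified Lean document; each statement's English description precedes it below -/
import Mathlib

section
/- Let K ⊂ ℝ^n be a nonempty compact convex set and let (h_j) be a sequence of convex continuous functions ℝ^n → ℝ such that (h_j) is strictly increasing (h_j(x) < h_{j+1}(x) for all x), each h_j(x) - a_j|x|² is bounded with a_j → ∞ strictly increasing positive, and lim_j h_j(x) = 0 for x ∈ K while lim_j h_j(x) = ∞ for x ∉ K. Then for every x ∈ ℝ^n, lim_{j→∞} sup_{y ∈ ℝ^n} (x·y - h_j(y)) = max_{y ∈ K} (x·y). -/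
open scoped RealInnerProductSpace

noncomputable section

abbrev Euc (n : ℕ) := EuclideanSpace ℝ (Fin n)

/-- A continuous function on Euclidean space dominated by a downward quadratic
attains its supremum. -/
lemma exists_max_of_quadratic_bound {n : ℕ} (f : Euc n → ℝ) (hf : Continuous f)
    (c1 c2 b : ℝ) (hc1 : 0 ≤ c1) (hc2 : 0 ≤ c2) (hb : 0 < b)
    (hbound : ∀ y, f y ≤ c1 * ‖y‖ - b * ‖y‖ ^ 2 + c2) :
    ∃ y0 : Euc n, ∀ y, f y ≤ f y0 := by
  set R : ℝ := max 1 ((c1 + c2 + |f 0| + 1) / b) with hR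
  have hR1 : (1 : ℝ) ≤ R := le_max_left _ _
  have hR0 : (0 : ℝ) ≤ R := by linarith
  obtain ⟨y0, hy0mem, hy0⟩ := (isCompact_closedBall (0 : Euc n) R).exists_isMaxOn
    ⟨0, Metric.mem_closedBall_self hR0⟩ hf.continuousOn
  refine ⟨y0, fun y => ?_⟩
  by_cases hy : y ∈ Metric.closedBall (0 : Euc n) R
  · exact isMaxOn_iff.mp hy0 y hy
  · have h0 : f 0 ≤ f y0 := isMaxOn_iff.mp hy0 0 (Metric.mem_closedBall_self hR0)
    have ht : R < ‖y‖ := by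
      simpa [Metric.mem_closedBall, dist_zero_right, not_le] using hy
    have ht1 : (1 : ℝ) ≤ ‖y‖ := le_trans hR1 ht.le
    have hbt : c1 + c2 + |f 0| + 1 ≤ b * ‖y‖ := by
      have : (c1 + c2 + |f 0| + 1) / b ≤ ‖y‖ := le_trans (le_max_right _ _) ht.le
      rw [mul_comm]
      exact (div_le_iff₀ hb).mp this
    have habs : -(f 0) ≤ |f 0| := neg_le_abs _
    have hby := hbound y
    nlinarith [mul_nonneg (sub_nonneg.mpr hbt) (sub_nonneg.mpr ht1),
      mul_nonneg hc2 (sub_nonneg.mpr ht1),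
      mul_nonneg (abs_nonneg (f 0)) (sub_nonneg.mpr ht1)]

/-- Legendre transforms of an increasing sequence of convex functions
converging to the indicator of a nonempty compact convex set `K` converge pointwise
to the support function of `K`. -/
theorem stmt2 (n : ℕ) (K : Set (Euc n)) (hK : IsCompact K) (hKne : K.Nonempty)
    (hKconv : Convex ℝ K) (a : ℕ → ℝ) (h : ℕ → Euc n → ℝ)
    (hconvj : ∀ j, ConvexOn ℝ Set.univ (h j)) (hcontj : ∀ j, Continuous (h j))
    (hmono : ∀ j x, h j x < h (j + 1) x)
    (hbdd : ∀ j, ∃ M : ℝ, ∀ x : Euc n, |h j x - a j * ‖x‖ ^ 2| ≤ M)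
    (hapos : ∀ j, 0 < a j) (hamono : StrictMono a)
    (hatop : Filter.Tendsto a Filter.atTop Filter.atTop)
    (hlimK : ∀ x ∈ K, Filter.Tendsto (fun j => h j x) Filter.atTop (nhds 0))
    (hlimKc : ∀ x ∉ K, Filter.Tendsto (fun j => h j x) Filter.atTop Filter.atTop)
    (x : Euc n) :
    Filter.Tendsto (fun j => sSup (Set.range fun y : Euc n => ⟪x, y⟫ - h j y))
      Filter.atTop (nhds (sSup ((fun y : Euc n => ⟪x, y⟫) '' K))) := by
  classical
  -- Notation
  set g : ℕ → Euc n → ℝ := fun j y => ⟪x, y⟫ - h j y with hgdef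
  -- h is monotone in j
  have hmono' : ∀ y : Euc n, Monotone fun j => h j y := fun y =>
    monotone_nat_of_le_succ fun j => (hmono j y).le
  -- h j y ≤ 0 on K
  have hKle : ∀ j, ∀ y ∈ K, h j y ≤ 0 := by
    intro j y hy
    refine ge_of_tendsto (hlimK y hy) ?_
    exact Filter.eventually_atTop.2 ⟨j, fun m hm => hmono' y hm⟩
  -- bounds M j
  choose M hM using hbdd
  have hMnn : ∀ j, 0 ≤ M j := by
    intro j
    have := hM j 0
    simp only [norm_zero] at this
    have : |h j 0| ≤ M j := by simpa using this
    exact le_trans (abs_nonneg _) this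
  have hlb : ∀ j y, a j * ‖y‖ ^ 2 - M j ≤ h j y := by
    intro j y
    have := abs_le.mp (hM j y)
    linarith [this.1]
  -- inner product continuity
  have hinncont : Continuous fun y : Euc n => ⟪x, y⟫ :=
    continuous_const.inner continuous_id
  -- maximizers of g j
  have hmax : ∀ j, ∃ y0 : Euc n, ∀ y, g j y ≤ g j y0 := by
    intro j
    refine exists_max_of_quadratic_bound (g j) (hinncont.sub (hcontj j)) ‖x‖ (M j)
      (a j) (norm_nonneg x) (hMnn j) (hapos j) fun y => ?_
    have h1 : ⟪x, y⟫ ≤ ‖x‖ * ‖y‖ := real_inner_le_norm x y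
    have h2 := hlb j y
    simp only [hgdef]
    linarith
  choose Y hY using hmax
  -- f j = sSup = g j (Y j)
  set f : ℕ → ℝ := fun j => sSup (Set.range fun y : Euc n => ⟪x, y⟫ - h j y) with hfdef
  have hfval : ∀ j, f j = g j (Y j) := by
    intro j
    refine IsGreatest.csSup_eq ⟨⟨Y j, rfl⟩, ?_⟩
    rintro _ ⟨y, rfl⟩
    exact hY j y
  -- maximizer of the linear functional on K
  obtain ⟨z, hzK, hz⟩ := hK.exists_isMaxOn hKne hinncont.continuousOn
  have hSgreat : IsGreatest ((fun y : Euc n => ⟪x, y⟫) '' K) ⟪x, z⟫ := by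
    constructor
    · exact ⟨z, hzK, rfl⟩
    · rintro _ ⟨y, hy, rfl⟩
      exact isMaxOn_iff.mp hz y hy
  set S : ℝ := sSup ((fun y : Euc n => ⟪x, y⟫) '' K) with hSdef
  have hSz : S = ⟪x, z⟫ := hSgreat.csSup_eq
  -- lower bound: S ≤ f j
  have hlow : ∀ j, S ≤ f j := by
    intro j
    rw [hfval j, hSz]
    have h1 : g j z ≤ g j (Y j) := hY j z
    have h2 : h j z ≤ 0 := hKle j z hzK
    simp only [hgdef] at h1 ⊢
    linarith
  -- f is antitone
  have hanti : Antitone f := by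
    refine antitone_nat_of_succ_le fun j => ?_
    rw [hfval j, hfval (j + 1)]
    calc g (j + 1) (Y (j + 1)) ≤ g j (Y (j + 1)) := by
          simp only [hgdef]; linarith [hmono j (Y (j + 1))]
      _ ≤ g j (Y j) := hY j _
  have hbel : BddBelow (Set.range f) := ⟨S, by rintro _ ⟨j, rfl⟩; exact hlow j⟩
  set L : ℝ := ⨅ j, f j with hLdef
  have htends : Filter.Tendsto f Filter.atTop (nhds L) :=
    tendsto_atTop_ciInf hanti hbel
  have hSL : S ≤ L := le_ciInf hlow
  have hLf : ∀ j, L ≤ f j := fun j => ciInf_le hbel j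
  -- uniform bound on the maximizers
  set R : ℝ := max 1 ((‖x‖ + M 0 + |S| + 1) / a 0) with hRdef
  have hYR : ∀ j, ‖Y j‖ ≤ R := by
    intro j
    by_contra hc
    push_neg at hc
    have ht1 : (1 : ℝ) ≤ ‖Y j‖ := le_trans (le_max_left _ _) hc.le
    have hbt : ‖x‖ + M 0 + |S| + 1 ≤ a 0 * ‖Y j‖ := by
      have h1 : (‖x‖ + M 0 + |S| + 1) / a 0 ≤ ‖Y j‖ :=
        le_trans (le_max_right _ _) hc.le
      rw [mul_comm]
      exact (div_le_iff₀ (hapos 0)).mp h1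
    have hSf : S ≤ f j := hlow j
    rw [hfval j] at hSf
    have h1 : ⟪x, Y j⟫ ≤ ‖x‖ * ‖Y j‖ := real_inner_le_norm x (Y j)
    have h2 : a 0 * ‖Y j‖ ^ 2 - M 0 ≤ h j (Y j) :=
      le_trans (hlb 0 (Y j)) (hmono' (Y j) (Nat.zero_le j))
    have h3 : -S ≤ |S| := neg_le_abs S
    simp only [hgdef] at hSf
    nlinarith [mul_nonneg (sub_nonneg.mpr hbt) (sub_nonneg.mpr ht1),
      mul_nonneg (hMnn 0) (sub_nonneg.mpr ht1),
      mul_nonneg (abs_nonneg S) (sub_nonneg.mpr ht1)]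
  -- a convergent subsequence of maximizers
  have hYmem : ∀ j, Y j ∈ Metric.closedBall (0 : Euc n) R := by
    intro j
    simpa [Metric.mem_closedBall, dist_zero_right] using hYR j
  obtain ⟨ystar, hystar, φ, hφ, hconv⟩ :=
    (isCompact_closedBall (0 : Euc n) R).tendsto_subseq hYmem
  have hφtop : Filter.Tendsto φ Filter.atTop Filter.atTop := hφ.tendsto_atTop
  -- key inequality
  have hkey : ∀ k, h k ystar ≤ ⟪x, ystar⟫ - L := by
    intro k
    have t1 : Filter.Tendsto (fun j => h k (Y (φ j))) Filter.atTop
        (nhds (h k ystar)) := ((hcontj k).tendsto ystar).comp hconv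
    have t2 : Filter.Tendsto (fun j => ⟪x, Y (φ j)⟫ - L) Filter.atTop
        (nhds (⟪x, ystar⟫ - L)) :=
      ((hinncont.tendsto ystar).comp hconv).sub tendsto_const_nhds
    have ev : ∀ᶠ j in Filter.atTop, h k (Y (φ j)) ≤ ⟪x, Y (φ j)⟫ - L := by
      filter_upwards [hφtop.eventually_ge_atTop k] with j hj
      have h1 : h k (Y (φ j)) ≤ h (φ j) (Y (φ j)) := hmono' _ hj
      have h2 := hfval (φ j)
      have h3 := hLf (φ j)
      simp only [hgdef] at h2
      rw [h2] at h3
      linarith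
    exact le_of_tendsto_of_tendsto t1 t2 ev
  -- ystar ∈ K
  have hystarK : ystar ∈ K := by
    by_contra hc
    obtain ⟨k, hk⟩ := ((hlimKc ystar hc).eventually_gt_atTop
      (⟪x, ystar⟫ - L)).exists
    exact absurd (hkey k) (not_le.mpr hk)
  -- L ≤ S
  have hLS : L ≤ S := by
    have h0 : (0 : ℝ) ≤ ⟪x, ystar⟫ - L :=
      le_of_tendsto (hlimK ystar hystarK) (Filter.Eventually.of_forall hkey)
    have h1 : ⟪x, ystar⟫ ≤ ⟪x, z⟫ := isMaxOn_iff.mp hz ystar hystarK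
    rw [hSz]; linarith
  have : L = S := le_antisymm hLS hSL
  rw [← this]
  exact htends
end
end

section
/- Let K ⊂ ℝ^n × ℝ^n be compact with boundary a strictly convex C^∞ hypersurface. Define c : pr(K) × ℝ^n → ℝ by c(q,v) = max_{p ∈ K_q} p·v. Then c is continuous. Consequently, len_K is continuous on {γ ∈ L^{1,2}(S¹, ℝ^n) : γ(S¹) ⊂ pr(K)} with the L^{1,2} topology. -/
open scoped RealInnerProductSpace
open MeasureTheory Filter

noncomputable section

/-!
Write `c(q, v) = sup {⟪p, v⟫ | (q, p) ∈ K}`. Since the fibers of `K` are uniformly bounded,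
`c(q, ·)` is Lipschitz with a constant independent of `q`, so joint continuity reduces to
continuity of `c(·, v)` on `pr K`. Convexity of `K` makes `c(·, v)` concave, hence continuous on
the interior of `pr K`. Over a boundary point `q₀` of `pr K` every point of the fiber lies on
`∂K` (an interior point of `K` would project into the interior of `pr K`), so strict convexity
leaves a single point `p₀` there, and compactness of `K` forces maximisers over nearby `q`
towards `p₀`.

For `len_K`, the Lipschitz bound controls the change of velocity in `L¹`, while the change of
position is handled by dominated convergence along almost everywhere convergent subsequences,
`L²`-convergence implying convergence in measure.
-/

open Set Topology
open scoped NNReal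

section Fiber

variable {X Y : Type*} {K : Set (X × Y)}

def fiber (K : Set (X × Y)) (q : X) : Set Y := {p | (q, p) ∈ K}

lemma fiber_nonempty {q : X} (hq : q ∈ Prod.fst '' K) : (fiber K q).Nonempty := by
  obtain ⟨⟨q, p⟩, hqp, rfl⟩ := hq
  exact ⟨p, hqp⟩

variable [TopologicalSpace X] [TopologicalSpace Y]

lemma IsCompact.fiber [T2Space X] [T2Space Y] (hK : IsCompact K) (q : X) :
    IsCompact (fiber K q) :=
  (hK.image continuous_snd).of_isClosed_subset
    (hK.isClosed.preimage (Continuous.prodMk_right q)) fun p hp => ⟨(q, p), hp, rfl⟩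

lemma tendsto_of_fiber_subset_singleton [T2Space X] {ι : Type*} (hK : IsCompact K)
    {q₀ : X} {p₀ : Y} (h₀ : fiber K q₀ ⊆ {p₀}) {l : Filter ι} {q : ι → X} {p : ι → Y}
    (hq : Tendsto q l (𝓝 q₀)) (hp : ∀ᶠ i in l, (q i, p i) ∈ K) : Tendsto p l (𝓝 p₀) := by
  refine (continuous_snd.tendsto (q₀, p₀)).comp
    (hK.tendsto_nhds_of_unique_mapClusterPt hp fun x hxK hx => ?_)
  have hx₁ : x.1 = q₀ :=
    eq_of_nhds_neBot ((hx.tendsto_comp (continuous_fst.tendsto x)).clusterPt.mono hq)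
  have hx₂ : x.2 = p₀ := h₀ (show (q₀, x.2) ∈ K from hx₁ ▸ hxK)
  exact Prod.ext hx₁ hx₂

end Fiber

lemma fiber_subsingleton_of_notMem_interior {E F : Type*} [NormedAddCommGroup E]
    [NormedSpace ℝ E] [NormedAddCommGroup F] [NormedSpace ℝ F] {K : Set (E × F)} {q : E}
    (hK : IsClosed K)
    (hstrict : ∀ x ∈ frontier K, ∀ y ∈ frontier K, x ≠ y → midpoint ℝ x y ∈ interior K)
    (hq : q ∉ interior (Prod.fst '' K)) : (fiber K q).Subsingleton := by
  have hint : ∀ x ∈ interior K, x.1 ∈ interior (Prod.fst '' K) := fun x hx =>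
    isOpenMap_fst.image_interior_subset K (mem_image_of_mem _ hx)
  have hfr : ∀ p ∈ fiber K q, (q, p) ∈ frontier K := fun p hp =>
    hK.frontier_eq ▸ ⟨hp, fun h => hq (hint _ h)⟩
  intro p hp p' hp'
  by_contra hne
  have hmid := hint _ (hstrict _ (hfr p hp) _ (hfr p' hp') (by simpa using hne))
  exact hq (by simpa [midpoint] using hmid)

section FiberSupport

variable {E F : Type*} [NormedAddCommGroup F] [InnerProductSpace ℝ F] {K : Set (E × F)} {q : E}

def fiberSupport (K : Set (E × F)) (q : E) (v : F) : ℝ :=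
  sSup ((fun p => ⟪p, v⟫) '' fiber K q)

lemma fiberSupport_zero_right (hq : q ∈ Prod.fst '' K) : fiberSupport K q 0 = 0 := by
  simp [fiberSupport, (fiber_nonempty hq).image_const]

variable [NormedAddCommGroup E]

lemma inner_le_fiberSupport (hK : IsCompact K) {p : F} (hp : p ∈ fiber K q) (v : F) :
    ⟪p, v⟫ ≤ fiberSupport K q v :=
  le_csSup (((hK.fiber q).image (by fun_prop : Continuous fun p : F => ⟪p, v⟫)).bddAbove)
    (mem_image_of_mem _ hp)

lemma exists_fiberSupport_eq_inner (hK : IsCompact K) (hq : q ∈ Prod.fst '' K) (v : F) :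
    ∃ p ∈ fiber K q, fiberSupport K q v = ⟪p, v⟫ := by
  obtain ⟨p, hp, hpv⟩ :=
    ((hK.fiber q).image (by fun_prop : Continuous fun p : F => ⟪p, v⟫)).sSup_mem
      ((fiber_nonempty hq).image _)
  exact ⟨p, hp, hpv.symm⟩

lemma exists_lipschitzWith_fiberSupport (hK : IsCompact K) :
    ∃ R : ℝ≥0, ∀ q ∈ Prod.fst '' K, LipschitzWith R (fiberSupport K q) := by
  obtain ⟨R, hR⟩ := hK.isBounded.exists_norm_le
  refine ⟨R.toNNReal, fun q hq => LipschitzWith.of_le_add_mul' R fun v w => ?_⟩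
  obtain ⟨p, hp, hpv⟩ := exists_fiberSupport_eq_inner hK hq v
  have hpR : ‖p‖ ≤ R := (norm_snd_le (q, p)).trans (hR _ hp)
  calc fiberSupport K q v = ⟪p, w⟫ + ⟪p, v - w⟫ := by rw [hpv, inner_sub_right]; ring
    _ ≤ fiberSupport K q w + R * dist v w := by
      rw [dist_eq_norm]
      gcongr
      · exact inner_le_fiberSupport hK hp w
      · exact (real_inner_le_norm _ _).trans (by gcongr)

lemma concaveOn_fiberSupport [NormedSpace ℝ E] (hK : IsCompact K) (hconv : Convex ℝ K)
    (v : F) : ConcaveOn ℝ (Prod.fst '' K) (fiberSupport K · v) := by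
  refine ⟨hconv.linear_image (LinearMap.fst ℝ E F), ?_⟩
  intro q hq q' hq' a b ha hb hab
  obtain ⟨p, hp, hpv⟩ := exists_fiberSupport_eq_inner hK hq v
  obtain ⟨p', hp', hp'v⟩ := exists_fiberSupport_eq_inner hK hq' v
  have hmem : a • p + b • p' ∈ fiber K (a • q + b • q') := hconv hp hp' ha hb hab
  calc a • fiberSupport K q v + b • fiberSupport K q' v = ⟪a • p + b • p', v⟫ := by
        simp [hpv, hp'v, inner_add_left, real_inner_smul_left]
    _ ≤ _ := inner_le_fiberSupport hK hmem v

lemma continuousWithinAt_fiberSupport_of_subsingleton (hK : IsCompact K) {q₀ : E}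
    (hq₀ : q₀ ∈ Prod.fst '' K) (h₀ : (fiber K q₀).Subsingleton) (v : F) :
    ContinuousWithinAt (fiberSupport K · v) (Prod.fst '' K) q₀ := by
  choose! p hpK hpv using fun q (hq : q ∈ Prod.fst '' K) => exists_fiberSupport_eq_inner hK hq v
  have hp : Tendsto p (𝓝[Prod.fst '' K] q₀) (𝓝 (p q₀)) :=
    tendsto_of_fiber_subset_singleton hK (fun p' hp' => h₀ hp' (hpK q₀ hq₀))
      nhdsWithin_le_nhds (eventually_nhdsWithin_of_forall hpK)
  have hinner : Tendsto (fun q => ⟪p q, v⟫) (𝓝[Prod.fst '' K] q₀) (𝓝 ⟪p q₀, v⟫) :=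
    hp.inner tendsto_const_nhds
  rw [ContinuousWithinAt, hpv q₀ hq₀]
  exact hinner.congr' (eventually_nhdsWithin_of_forall fun q hq => (hpv q hq).symm)

lemma continuousOn_fiberSupport [NormedSpace ℝ E] [FiniteDimensional ℝ E] (hK : IsCompact K)
    (hconv : Convex ℝ K)
    (hstrict : ∀ x ∈ frontier K, ∀ y ∈ frontier K, x ≠ y → midpoint ℝ x y ∈ interior K) :
    ContinuousOn (Function.uncurry (fiberSupport K)) ((Prod.fst '' K) ×ˢ univ) := by
  obtain ⟨R, hR⟩ := exists_lipschitzWith_fiberSupport hK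
  refine continuousOn_prod_of_continuousOn_lipschitzOnWith' _ R
    (fun q hq => (hR q hq).lipschitzOnWith) fun v _ q hq => ?_
  by_cases hqi : q ∈ interior (Prod.fst '' K)
  · exact ((concaveOn_fiberSupport hK hconv v).continuousOn_interior.continuousAt
      (isOpen_interior.mem_nhds hqi)).continuousWithinAt
  · exact continuousWithinAt_fiberSupport_of_subsingleton hK hq
      (fiber_subsingleton_of_notMem_interior hK.isClosed hstrict hqi) v

end FiberSupport

section Integrals

variable {α : Type*} [MeasurableSpace α] {μ : Measure α}

lemma ContinuousOn.aestronglyMeasurable_comp {X Y : Type*} [TopologicalSpace X]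
    [MeasurableSpace X] [OpensMeasurableSpace X] [TopologicalSpace Y]
    [TopologicalSpace.PseudoMetrizableSpace Y] [SecondCountableTopology Y] [MeasurableSpace Y]
    [BorelSpace Y] {φ : X → Y} {s : Set X} (hφ : ContinuousOn φ s) {h : α → X}
    (hh : AEMeasurable h μ) (hs : ∀ a, h a ∈ s) : AEStronglyMeasurable (fun a => φ (h a)) μ :=
  (hφ.domRestrict.measurable.comp_aemeasurable (hh.subtype_mk (hfs := hs))).aestronglyMeasurable

lemma tendsto_eLpNorm_two_of_integral_norm_sq_le {E : Type*} [NormedAddCommGroup E]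
    {h : ℕ → α → E} {u : ℕ → ℝ} (hh : ∀ k, MemLp (h k) 2 μ)
    (hle : ∀ k, ∫ a, ‖h k a‖ ^ 2 ∂μ ≤ u k) (hu : Tendsto u atTop (𝓝 0)) :
    Tendsto (fun k => eLpNorm (h k) 2 μ) atTop (𝓝 0) := by
  have hsq : Tendsto (fun k => ∫ a, ‖h k a‖ ^ 2 ∂μ) atTop (𝓝 0) :=
    squeeze_zero (fun k => integral_nonneg fun a => by positivity) hle hu
  have := (ENNReal.continuous_ofReal.tendsto _).comp
    ((Real.continuousAt_rpow_const _ (2⁻¹ : ℝ) (Or.inr (by norm_num))).tendsto.comp hsq)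
  simpa [Function.comp_def, (hh _).eLpNorm_eq_integral_rpow_norm two_ne_zero ENNReal.ofNat_ne_top]
    using this

lemma tendsto_eLpNorm_two_of_tendsto_integral_norm_sq_add {E F : Type*} [NormedAddCommGroup E]
    [NormedAddCommGroup F] {h₁ : ℕ → α → E} {h₂ : ℕ → α → F} (hh₁ : ∀ k, MemLp (h₁ k) 2 μ)
    (hh₂ : ∀ k, MemLp (h₂ k) 2 μ)
    (hlim : Tendsto (fun k => ∫ a, (‖h₁ k a‖ ^ 2 + ‖h₂ k a‖ ^ 2) ∂μ) atTop (𝓝 0)) :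
    Tendsto (fun k => eLpNorm (h₁ k) 2 μ) atTop (𝓝 0) ∧
      Tendsto (fun k => eLpNorm (h₂ k) 2 μ) atTop (𝓝 0) := by
  have hint₁ k := (hh₁ k).integrable_norm_pow two_ne_zero
  have hint₂ k := (hh₂ k).integrable_norm_pow two_ne_zero
  exact ⟨tendsto_eLpNorm_two_of_integral_norm_sq_le hh₁ (fun k => integral_mono (hint₁ k)
      ((hint₁ k).add (hint₂ k)) fun a => le_add_of_nonneg_right (by positivity)) hlim,
    tendsto_eLpNorm_two_of_integral_norm_sq_le hh₂ (fun k => integral_mono (hint₂ k)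
      ((hint₁ k).add (hint₂ k)) fun a => le_add_of_nonneg_left (by positivity)) hlim⟩

theorem tendsto_integral_comp_of_tendstoInMeasure {X G : Type*} [PseudoEMetricSpace X]
    [NormedAddCommGroup G] [NormedSpace ℝ G] {Ψ : α → X → G} {S : Set X}
    {f : ℕ → α → X} {f₀ : α → X} {bound : α → ℝ}
    (hΨ : ∀ a, ContinuousOn (Ψ a) S) (hfS : ∀ k a, f k a ∈ S) (hf₀S : ∀ a, f₀ a ∈ S)
    (hmeas : ∀ k, AEStronglyMeasurable (fun a => Ψ a (f k a)) μ)
    (hbound : ∀ k, ∀ᵐ a ∂μ, ‖Ψ a (f k a)‖ ≤ bound a) (hint : Integrable bound μ)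
    (hf : TendstoInMeasure μ f atTop f₀) :
    Tendsto (fun k => ∫ a, Ψ a (f k a) ∂μ) atTop (𝓝 (∫ a, Ψ a (f₀ a) ∂μ)) := by
  refine tendsto_of_subseq_tendsto fun ns hns => ?_
  obtain ⟨ms, -, hae⟩ := TendstoInMeasure.exists_seq_tendsto_ae fun ε hε => (hf ε hε).comp hns
  refine ⟨ms, tendsto_integral_of_dominated_convergence bound (fun j => hmeas _) hint
    (fun j => hbound _) (hae.mono fun a ha => ?_)⟩
  exact ((hΨ a) (f₀ a) (hf₀S a)).tendsto.comp
    (tendsto_nhdsWithin_iff.2 ⟨ha, Eventually.of_forall fun j => hfS _ a⟩)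

theorem tendsto_integral_sub_of_lipschitzWith {X F : Type*} [NormedAddCommGroup F]
    {Φ : X → F → ℝ} {S : Set X} {R : ℝ≥0} (hΦ : ∀ x ∈ S, LipschitzWith R (Φ x))
    {f : ℕ → α → X} (hfS : ∀ k a, f k a ∈ S) {g : ℕ → α → F} {g₀ : α → F}
    (hint : ∀ k, Integrable (fun a => Φ (f k a) (g k a)) μ)
    (hint₀ : ∀ k, Integrable (fun a => Φ (f k a) (g₀ a)) μ)
    (hg : Tendsto (fun k => eLpNorm (g k - g₀) 1 μ) atTop (𝓝 0)) :
    Tendsto (fun k => ∫ a, Φ (f k a) (g k a) ∂μ - ∫ a, Φ (f k a) (g₀ a) ∂μ) atTop (𝓝 0) := by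
  have hle : ∀ k, eLpNorm (fun a => Φ (f k a) (g k a) - Φ (f k a) (g₀ a)) 1 μ ≤
      R • eLpNorm (g k - g₀) 1 μ := fun k =>
    eLpNorm_le_nnreal_smul_eLpNorm_of_ae_le_mul' (ae_of_all _ fun a => by
      simpa [edist_eq_enorm_sub] using (hΦ _ (hfS k a)).edist_le_mul (g k a) (g₀ a)) 1
  have hlim : Tendsto (fun k => eLpNorm (fun a => Φ (f k a) (g k a) - Φ (f k a) (g₀ a)) 1 μ)
      atTop (𝓝 0) := by
    refine tendsto_of_tendsto_of_tendsto_of_le_of_le tendsto_const_nhds ?_ (fun k => bot_le) hle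
    simpa [ENNReal.smul_def] using ENNReal.Tendsto.const_mul hg (Or.inr ENNReal.coe_ne_top)
  refine squeeze_zero_norm (fun k => ?_) ((ENNReal.tendsto_toReal ENNReal.zero_ne_top).comp hlim)
  rw [← integral_sub (hint k) (hint₀ k)]
  refine (norm_integral_le_lintegral_norm _).trans_eq ?_
  simp [eLpNorm_one_eq_lintegral_enorm, Real.enorm_eq_ofReal_abs]

theorem tendsto_integral_comp_of_tendstoInMeasure_of_tendsto_eLpNorm {X F : Type*}
    [PseudoEMetricSpace X] [MeasurableSpace X] [OpensMeasurableSpace X] [NormedAddCommGroup F]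
    [MeasurableSpace F] [BorelSpace F] [SecondCountableTopologyEither X F]
    {Φ : X → F → ℝ} {S : Set X} {R : ℝ≥0} (hΦ : ContinuousOn (Function.uncurry Φ) (S ×ˢ univ))
    (hΦL : ∀ x ∈ S, LipschitzWith R (Φ x)) (hΦ0 : ∀ x ∈ S, Φ x 0 = 0)
    {f : ℕ → α → X} {f₀ : α → X} {g : ℕ → α → F} {g₀ : α → F}
    (hf : ∀ k, AEMeasurable (f k) μ) (hfS : ∀ k a, f k a ∈ S) (hf₀S : ∀ a, f₀ a ∈ S)
    (hg : ∀ k, Integrable (g k) μ) (hg₀ : Integrable g₀ μ)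
    (hfg : TendstoInMeasure μ f atTop f₀)
    (hgg : Tendsto (fun k => eLpNorm (g k - g₀) 1 μ) atTop (𝓝 0)) :
    Tendsto (fun k => ∫ a, Φ (f k a) (g k a) ∂μ) atTop (𝓝 (∫ a, Φ (f₀ a) (g₀ a) ∂μ)) := by
  have hbound : ∀ x ∈ S, ∀ v, ‖Φ x v‖ ≤ R * ‖v‖ := fun x hx v => by
    simpa [hΦ0 x hx] using (hΦL x hx).dist_le_mul v 0
  have hmeas : ∀ k {w : α → F}, Integrable w μ →
      AEStronglyMeasurable (fun a => Φ (f k a) (w a)) μ := fun k w hw =>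
    hΦ.aestronglyMeasurable_comp ((hf k).prodMk hw.aemeasurable) fun a => ⟨hfS k a, trivial⟩
  have hint : ∀ k {w : α → F}, Integrable w μ → Integrable (fun a => Φ (f k a) (w a)) μ :=
    fun k w hw => (hw.norm.const_mul R).mono' (hmeas k hw)
      (ae_of_all _ fun a => hbound _ (hfS k a) _)
  have hdiff := tendsto_integral_sub_of_lipschitzWith hΦL hfS (fun k => hint k (hg k))
    (fun k => hint k hg₀) hgg
  have hfixed := tendsto_integral_comp_of_tendstoInMeasure (Ψ := fun a x => Φ x (g₀ a))
    (fun a => hΦ.comp (Continuous.prodMk_left (g₀ a)).continuousOn fun x hx => ⟨hx, trivial⟩)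
    hfS hf₀S (fun k => hmeas k hg₀) (fun k => ae_of_all _ fun a => hbound _ (hfS k a) _)
    (hg₀.norm.const_mul R) hfg
  simpa using hdiff.add hfixed

end Integrals

theorem stmt10_general (n : ℕ) (K : Set (Euc n × Euc n)) (hK : IsCompact K)
    (hconv : Convex ℝ K)
    (hstrict : ∀ x ∈ frontier K, ∀ y ∈ frontier K, x ≠ y → midpoint ℝ x y ∈ interior K) :
    ContinuousOn
        (fun qv : Euc n × Euc n =>
          sSup ((fun p : Euc n => ⟪p, qv.2⟫) '' {p : Euc n | (qv.1, p) ∈ K}))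
        ((Prod.fst '' K) ×ˢ (Set.univ : Set (Euc n))) ∧
      ∀ (γ g : ℕ → ℝ → Euc n) (γ₀ g₀ : ℝ → Euc n),
        (∀ k, Function.Periodic (γ k) 1) → Function.Periodic γ₀ 1 →
        (∀ k, Continuous (γ k)) → Continuous γ₀ →
        (∀ k, ∀ᵐ t : ℝ, HasDerivAt (γ k) (g k t) t) →
        (∀ᵐ t : ℝ, HasDerivAt γ₀ (g₀ t) t) →
        (∀ k, MemLp (g k) 2 (volume.restrict (Set.Icc (0 : ℝ) 1))) →
        (MemLp g₀ 2 (volume.restrict (Set.Icc (0 : ℝ) 1))) →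
        (∀ k t, γ k t ∈ Prod.fst '' K) → (∀ t, γ₀ t ∈ Prod.fst '' K) →
        Tendsto
          (fun k => ∫ t in (0 : ℝ)..1, (‖γ k t - γ₀ t‖ ^ 2 + ‖g k t - g₀ t‖ ^ 2))
          atTop (nhds 0) →
        Tendsto
          (fun k => ∫ t in (0 : ℝ)..1,
            sSup ((fun p : Euc n => ⟪p, g k t⟫) '' {p : Euc n | (γ k t, p) ∈ K}))
          atTop
          (nhds (∫ t in (0 : ℝ)..1,
            sSup ((fun p : Euc n => ⟪p, g₀ t⟫) '' {p : Euc n | (γ₀ t, p) ∈ K}))) := by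
  have hcont := continuousOn_fiberSupport hK hconv hstrict
  refine ⟨hcont, fun γ g γ₀ g₀ _ _ hγ hγ₀ _ _ hg hg₀ hγK hγ₀K hT => ?_⟩
  obtain ⟨R, hR⟩ := exists_lipschitzWith_fiberSupport hK
  set μ := volume.restrict (Icc (0 : ℝ) 1)
  have : IsProbabilityMeasure μ := ⟨by simp [μ]⟩
  simp only [intervalIntegral.integral_of_le zero_le_one, ← integral_Icc_eq_integral_Ioc] at hT ⊢
  have hγL2 : ∀ k, MemLp (γ k - γ₀) 2 μ := fun k =>
    (memLp_two_iff_integrable_sq_norm ((hγ k).sub hγ₀).aestronglyMeasurable).2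
      (((hγ k).sub hγ₀).norm.pow 2).integrableOn_Icc
  obtain ⟨hγ2, hg2⟩ :=
    tendsto_eLpNorm_two_of_tendsto_integral_norm_sq_add hγL2 (fun k => (hg k).sub hg₀) hT
  exact tendsto_integral_comp_of_tendstoInMeasure_of_tendsto_eLpNorm hcont hR
    (fun q hq => fiberSupport_zero_right hq) (fun k => (hγ k).aemeasurable) hγK hγ₀K
    (fun k => (hg k).integrable one_le_two) (hg₀.integrable one_le_two)
    (tendstoInMeasure_of_tendsto_eLpNorm two_ne_zero (fun k => (hγ k).aestronglyMeasurable)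
      hγ₀.aestronglyMeasurable hγ2)
    (tendsto_of_tendsto_of_tendsto_of_le_of_le tendsto_const_nhds hg2 (fun k => bot_le)
      fun k => eLpNorm_le_eLpNorm_of_exponent_le one_le_two ((hg k).sub hg₀).aestronglyMeasurable)

/-- for a compact convex body `K ⊆ ℝ^n × ℝ^n` with strictly convex
boundary, the fiberwise support function `c(q,v) = max_{p ∈ K_q} ⟪p, v⟫` is
continuous on `pr(K) × ℝ^n`; consequently `len_K` is (sequentially) continuous on
the set of `L^{1,2}` loops with image in `pr(K)`. -/
theorem stmt10 (n : ℕ) (K : Set (Euc n × Euc n)) (hK : IsCompact K)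
    (hconv : Convex ℝ K) (hint : (interior K).Nonempty)
    (hstrict : ∀ x ∈ frontier K, ∀ y ∈ frontier K, x ≠ y → midpoint ℝ x y ∈ interior K) :
    ContinuousOn
        (fun qv : Euc n × Euc n =>
          sSup ((fun p : Euc n => ⟪p, qv.2⟫) '' {p : Euc n | (qv.1, p) ∈ K}))
        ((Prod.fst '' K) ×ˢ (Set.univ : Set (Euc n))) ∧
      ∀ (γ g : ℕ → ℝ → Euc n) (γ₀ g₀ : ℝ → Euc n),
        (∀ k, Function.Periodic (γ k) 1) → Function.Periodic γ₀ 1 →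
        (∀ k, Continuous (γ k)) → Continuous γ₀ →
        (∀ k, ∀ᵐ t : ℝ, HasDerivAt (γ k) (g k t) t) →
        (∀ᵐ t : ℝ, HasDerivAt γ₀ (g₀ t) t) →
        (∀ k, MemLp (g k) 2 (volume.restrict (Set.Icc (0 : ℝ) 1))) →
        (MemLp g₀ 2 (volume.restrict (Set.Icc (0 : ℝ) 1))) →
        (∀ k t, γ k t ∈ Prod.fst '' K) → (∀ t, γ₀ t ∈ Prod.fst '' K) →
        Tendsto
          (fun k => ∫ t in (0 : ℝ)..1, (‖γ k t - γ₀ t‖ ^ 2 + ‖g k t - g₀ t‖ ^ 2))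
          atTop (nhds 0) →
        Tendsto
          (fun k => ∫ t in (0 : ℝ)..1,
            sSup ((fun p : Euc n => ⟪p, g k t⟫) '' {p : Euc n | (γ k t, p) ∈ K}))
          atTop
          (nhds (∫ t in (0 : ℝ)..1,
            sSup ((fun p : Euc n => ⟪p, g₀ t⟫) '' {p : Euc n | (γ₀ t, p) ∈ K}))) :=
  stmt10_general n K hK hconv hstrict
end
end

section
/- Let γ : S¹ → ℝ^n be a C¹ loop with γ'(t) ≠ 0 for all t, let K ⊂ ℝ^n × ℝ^n be compact and fiberwise convex with γ(S¹) ⊂ int(pr K), and suppose p₀, p₁ : S¹ → ℝ^n are measurable selections with (γ_s(t), (1-s)p₀(t) + s p₁(t)) ∈ K for all s ∈ [0,1], t ∈ S¹, where γ_s(t) = (s a + (1-s)) γ(t) + s x for fixed a ≥ 0, x ∈ ℝ^n. If L_s := ∫_{S¹} max_{p ∈ K_{γ_s(t)}} p · γ_s'(t) dt satisfies L_s ≥ ∫_{S¹} (1 + (a-1)s) γ'(t) · (p₀(t) + (p₁(t) - p₀(t))s) dt with equality at s = 0, L_0 = ∫ γ'·p₀ dt, L_1 = ∫ a γ'·p₁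 dt, dL_s/ds|_{s=0} = 0, and L_0 ≥ 0, then L_1 - L_0 ≤ -(a-1)² L_0 ≤ 0. -/
/-!
Both `L` and the quadratic lower bound `(1 + (a-1)s)(A + (B-A)s)` start at `A` for `s = 0`,
so on `[0,1]` the right derivative of the bound at `0`, namely `(a-1)A + B - A`, is at most
that of `L`, which is `0`. Thus `B ≤ (2-a)A`, and with `a ≥ 0` this gives
`L 1 - L 0 = aB - A ≤ (a(2-a) - 1)A = -(a-1)²A`.

Here `A = ∫ γ'·p₀`, `B = ∫ γ'·p₁` and `L s = len_K(γ_s)`.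
-/

open Set

theorem HasDerivWithinAt.le_of_le_of_eq_left {f g : ℝ → ℝ} {f' g' a b : ℝ}
    (hf : HasDerivWithinAt f f' (Icc a b) a) (hg : HasDerivWithinAt g g' (Icc a b) a)
    (hab : a < b) (hle : ∀ s ∈ Icc a b, f s ≤ g s) (heq : f a = g a) : f' ≤ g' := by
  have hmin : IsLocalMinOn (fun s => g s - f s) (Icc a b) a :=
    IsMinOn.localize fun s hs => by simpa [heq] using hle s hs
  have htangent : b - a ∈ posTangentConeAt (Icc a b) a :=
    sub_mem_posTangentConeAt_of_segment_subset (segment_eq_Icc hab.le).subset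
  have hnonneg : 0 ≤ (g' - f') * (b - a) := by
    simpa [mul_comm] using
      hmin.hasFDerivWithinAt_nonneg (hg.sub hf).hasFDerivWithinAt htangent
  nlinarith

theorem hasDerivAt_affine_mul_affine (c₀ c₁ d₀ d₁ : ℝ) :
    HasDerivAt (fun s => (c₀ + c₁ * s) * (d₀ + d₁ * s)) (c₁ * d₀ + c₀ * d₁) 0 := by
  have hc := ((hasDerivAt_id (0 : ℝ)).const_mul c₁).const_add c₀
  have hd := ((hasDerivAt_id (0 : ℝ)).const_mul d₁).const_add d₀
  exact (hc.mul hd).congr_deriv (by simp)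

/-- algebraic core of the key estimate in the proof that
`c_SH = c_EHZ` for convex bodies. Here `A = ∫ γ'·p₀`, `B = ∫ γ'·p₁`,
`L s = len_K(γ_s)`; from `L s ≥ (1+(a-1)s)(A + (B-A)s)` on `[0,1]` with equality
`L 0 = A`, `L 1 = aB`, vanishing derivative of `L` at `0`, and `L 0 ≥ 0`, one gets
`L 1 - L 0 ≤ -(a-1)² L 0 ≤ 0`. -/
theorem stmt14 (a A B : ℝ) (L : ℝ → ℝ) (ha : 0 ≤ a)
    (hineq : ∀ s ∈ Set.Icc (0 : ℝ) 1, (1 + (a - 1) * s) * (A + (B - A) * s) ≤ L s)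
    (hL0 : L 0 = A) (hL1 : L 1 = a * B)
    (hderiv : HasDerivWithinAt L 0 (Set.Icc (0 : ℝ) 1) 0)
    (hL0nonneg : 0 ≤ L 0) :
    L 1 - L 0 ≤ -(a - 1) ^ 2 * L 0 ∧ -(a - 1) ^ 2 * L 0 ≤ 0 := by
  have hbound := (hasDerivAt_affine_mul_affine 1 (a - 1) A (B - A)).hasDerivWithinAt
    (s := Icc 0 1)
  have hslope : (a - 1) * A + 1 * (B - A) ≤ 0 :=
    hbound.le_of_le_of_eq_left hderiv zero_lt_one hineq (by simp [hL0])
  rw [hL1, hL0] at *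
  constructor
  · nlinarith [mul_le_mul_of_nonneg_left hslope ha]
  · nlinarith [sq_nonneg (a - 1)]
end

section
/- Let K ⊂ ℝ² × ℝ² be a compact convex body whose boundary is a C^∞ strictly convex hypersurface (more generally in ℝ^n × ℝ^n), let Γ : S¹ → ∂K be a C¹ curve such that Γ'(t) spans ker(ω|_{T_{Γ(t)}∂K}) for all t, and set γ = pr ∘ Γ. If γ(S¹) ⊂ int(pr K), then γ'(t) ≠ 0 for all t ∈ S¹. -/
open scoped RealInnerProductSpace

noncomputable section

/-- if `Γ` is a characteristic curve on the boundary of a compact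
convex body `K ⊆ T*ℝ^n` (its velocity spans the kernel of the symplectic form
restricted to the boundary, i.e. it is a nonzero multiple of `J_std ν` for an
outward supporting normal `ν`), and the projection `γ = pr ∘ Γ` stays in the
interior of `pr(K)`, then `γ'(t) ≠ 0` for all `t`. -/
theorem stmt15 (n : ℕ) (K : Set (Euc n × Euc n)) (hK : IsCompact K)
    (hconv : Convex ℝ K)
    (Γ Γ' : ℝ → Euc n × Euc n) (hΓd : ∀ t, HasDerivAt Γ (Γ' t) t)
    (hΓfront : ∀ t, Γ t ∈ frontier K)
    (ν : ℝ → Euc n × Euc n) (hν0 : ∀ t, ν t ≠ 0)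
    (hsupp : ∀ t, ∀ z ∈ K,
      ⟪z.1, (ν t).1⟫ + ⟪z.2, (ν t).2⟫ ≤ ⟪(Γ t).1, (ν t).1⟫ + ⟪(Γ t).2, (ν t).2⟫)
    (hchar : ∀ t, ∃ c : ℝ, c ≠ 0 ∧ Γ' t = c • ((ν t).2, -(ν t).1))
    (hint : ∀ t, (Γ t).1 ∈ interior (Prod.fst '' K)) :
    ∀ t, (Γ' t).1 ≠ 0 := by
  intro t h
  obtain ⟨c, hc, hΓ'⟩ := hchar t
  have hν2 : (ν t).2 = 0 := by
    have : (Γ' t).1 = c • (ν t).2 := by rw [hΓ']; rfl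
    rw [h] at this
    exact (smul_eq_zero.mp this.symm).resolve_left hc
  have hν1 : (ν t).1 ≠ 0 := fun h1 => hν0 t (Prod.ext h1 hν2)
  obtain ⟨ε, hε, hball⟩ := Metric.mem_nhds_iff.mp (mem_interior_iff_mem_nhds.mp (hint t))
  set x := (Γ t).1 + (ε / (2 * ‖(ν t).1‖)) • (ν t).1 with hx
  have hnorm : ‖(ν t).1‖ > 0 := norm_pos_iff.mpr hν1
  have hxball : x ∈ Metric.ball (Γ t).1 ε := by
    rw [Metric.mem_ball, hx, dist_eq_norm]
    simp only [add_sub_cancel_left, norm_smul]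
    rw [Real.norm_eq_abs, abs_of_pos (by positivity)]
    have heq : ε / (2 * ‖(ν t).1‖) * ‖(ν t).1‖ = ε / 2 := by
      field_simp
    rw [heq]; linarith
  obtain ⟨a, haK, ha1⟩ := hball hxball
  have := hsupp t a haK
  rw [hν2, ha1, hx] at this
  simp only [inner_zero_right, add_zero, inner_add_left, inner_smul_left,
    real_inner_self_eq_norm_sq, RCLike.ofReal_real_eq_id, id_eq, conj_trivial] at this
  have hpos : 0 < ε / (2 * ‖(ν t).1‖) * ‖(ν t).1‖ ^ 2 := by positivity
  linarith
end
end
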